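/- arXiv:1403.6928 — 4 statements merged into one kernel-verified Lean document; each statement's English description precedes it below -/
import Mathlib

section
/- For every integer n ≥ 2 and every real skew-symmetric n×n matrix Θ, there exist a natural number n_q with 2·n_q ≤ n and an invertible real n×n matrix P such that P·Θ·Pᵀ equals the block-diagonal matrix diag(diag_{n_q}(J), 0_{(n−2n_q)×(n−2n_q)}), i.e. the matrix whose top-left 2n_q×2n_q block is diag_{n_q}(J) and whose remaining entries are zero. -/
open Matrix

/-- The 2×2 real matrix `J = [[0,1],[-1,0]]`. -/
def Jmat : Matrix (Fin 2) (Fin 2) ℝ := !![0, 1; -1, 0]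

/-- `diagJ k` is the `2k × 2k` block-diagonal real matrix with `k` copies of `J`. -/
def diagJ (k : ℕ) : Matrix (Fin (2 * k)) (Fin (2 * k)) ℝ :=
  Matrix.of fun i j =>
    if i.val / 2 = j.val / 2 then
      Jmat ⟨i.val % 2, Nat.mod_lt _ two_pos⟩ ⟨j.val % 2, Nat.mod_lt _ two_pos⟩
    else 0

/-- The `n × n` real matrix `diag(diag_{n_q}(J), 0)`: top-left `2 n_q × 2 n_q` block is
`diagJ n_q` and all remaining entries are zero. -/
def embedJ (n n_q : ℕ) : Matrix (Fin n) (Fin n) ℝ :=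
  Matrix.of fun i j =>
    if h : i.val < 2 * n_q ∧ j.val < 2 * n_q then diagJ n_q ⟨i.val, h.1⟩ ⟨j.val, h.2⟩ else 0

/-!
A nonzero real skew-symmetric matrix has a nonzero entry `a = A i j`, necessarily off the
diagonal. Permuting `i, j` to the first two positions makes the leading `2 × 2` block `a • J`,
which is invertible; congruence by the block unitriangular matrix of its Schur complement
clears the rest of the first two rows and columns, leaving `diag(a • J, S)` with `S`
skew-symmetric, and rescaling one coordinate turns `a • J` into `J`. Induction on the size,
applied to `S`, finishes.
-/

namespace Matrix

variable {ι κ R : Type*} [Fintype ι] [Fintype κ] [DecidableEq ι] [DecidableEq κ] [CommRing R]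

def Congruent (A B : Matrix ι ι R) : Prop :=
  ∃ P : Matrix ι ι R, IsUnit P ∧ P * A * Pᵀ = B

namespace Congruent

theorem refl (A : Matrix ι ι R) : Congruent A A :=
  ⟨1, isUnit_one, by simp⟩

theorem trans {A B C : Matrix ι ι R} : Congruent A B → Congruent B C → Congruent A C
  | ⟨P, hP, hAB⟩, ⟨Q, hQ, hBC⟩ =>
    ⟨Q * P, hQ.mul hP, by simp only [← hBC, ← hAB, transpose_mul, Matrix.mul_assoc]⟩

theorem transpose_eq_neg {A B : Matrix ι ι R} (h : Congruent A B) (hA : Aᵀ = -A) :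
    Bᵀ = -B := by
  obtain ⟨P, -, rfl⟩ := h
  simp [transpose_mul, hA, Matrix.mul_assoc]

theorem submatrix {A B : Matrix ι ι R} (h : Congruent A B)
    (e : κ ≃ ι) : Congruent (A.submatrix e e) (B.submatrix e e) := by
  obtain ⟨P, hP, rfl⟩ := h
  refine ⟨P.submatrix e e, (isUnit_submatrix_equiv e e).2 hP, ?_⟩
  rw [transpose_submatrix, submatrix_mul_equiv, submatrix_mul_equiv]

theorem fromBlocks_zero {A₁ B₁ : Matrix ι ι R}
    {A₂ B₂ : Matrix κ κ R} (h₁ : Congruent A₁ B₁) (h₂ : Congruent A₂ B₂) :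
    Congruent (fromBlocks A₁ 0 0 A₂) (fromBlocks B₁ 0 0 B₂) := by
  obtain ⟨P₁, hP₁, rfl⟩ := h₁
  obtain ⟨P₂, hP₂, rfl⟩ := h₂
  refine ⟨fromBlocks P₁ 0 0 P₂, ?_, by simp [fromBlocks_transpose, fromBlocks_multiply]⟩
  rw [isUnit_iff_isUnit_det] at hP₁ hP₂ ⊢
  rw [det_fromBlocks_zero₁₂]
  exact hP₁.mul hP₂

end Congruent

theorem congruent_submatrix_perm (A : Matrix ι ι R) (σ : Equiv.Perm ι) :
    Congruent A (A.submatrix σ σ) := by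
  refine ⟨σ.permMatrix R, ?_, ?_⟩
  · rw [isUnit_iff_isUnit_det, det_permutation]
    exact (Equiv.Perm.sign σ).isUnit.map (Int.castRingHom R)
  · rw [transpose_permMatrix, PEquiv.toMatrix_toPEquiv_mul, Equiv.Perm.permMatrix,
      PEquiv.mul_toMatrix_toPEquiv]
    rfl

theorem congruent_fromBlocks_zero_of_isUnit₁₁ {E : Matrix ι ι R}
    (hE : IsUnit E) (hEt : Eᵀ = -E) (B : Matrix ι κ R) (D : Matrix κ κ R) :
    Congruent (fromBlocks E B (-Bᵀ) D) (fromBlocks E 0 0 (D + Bᵀ * E⁻¹ * B)) := by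
  have hdet : IsUnit E.det := (isUnit_iff_isUnit_det E).mp hE
  -- `E⁻¹` is skew too, so the column operation clearing `B` is the transpose of the row
  -- operation clearing `-Bᵀ`.
  have hinv : E⁻¹ᵀ = -E⁻¹ := by
    rw [transpose_nonsing_inv, hEt]
    exact inv_eq_left_inv (by simp [nonsing_inv_mul _ hdet])
  refine ⟨fromBlocks 1 0 (Bᵀ * E⁻¹) 1, by simp [isUnit_iff_isUnit_det], ?_⟩
  simp [fromBlocks_transpose, fromBlocks_multiply, hinv, Matrix.mul_assoc,
    nonsing_inv_mul _ hdet, mul_nonsing_inv_cancel_left _ _ hdet, add_comm]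

end Matrix

theorem embedJ_zero (n : ℕ) : embedJ n 0 = 0 := by
  ext i j
  simp [embedJ]

theorem submatrix_finSumFinEquiv_embedJ (m k : ℕ) :
    (embedJ (2 + m) (k + 1)).submatrix finSumFinEquiv finSumFinEquiv =
      fromBlocks Jmat 0 0 (embedJ m k) := by
  ext (t | p) (s | q)
  · fin_cases t <;> fin_cases s <;> simp [embedJ, diagJ, Jmat] <;> omega
  all_goals
    simp only [embedJ, diagJ, submatrix_apply, of_apply, fromBlocks_apply₁₂,
      fromBlocks_apply₂₁, fromBlocks_apply₂₂, finSumFinEquiv_apply_left,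
      finSumFinEquiv_apply_right, Fin.val_castAdd, Fin.val_natAdd, Matrix.zero_apply]
    split_ifs <;> first | rfl | omega | simp [Nat.add_mod_left]

theorem eq_smul_Jmat_of_transpose_eq_neg {E : Matrix (Fin 2) (Fin 2) ℝ} (hE : Eᵀ = -E) :
    E = E 0 1 • Jmat := by
  have h (i j : Fin 2) : E j i = -E i j := congrFun (congrFun hE i) j
  ext i j
  fin_cases i <;> fin_cases j <;> simp [Jmat] <;> linarith [h 0 0, h 1 1, h 0 1]

theorem congruent_smul_Jmat {a : ℝ} (ha : a ≠ 0) : (a • Jmat).Congruent Jmat := by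
  refine ⟨diagonal ![a⁻¹, 1], by simp [isUnit_iff_isUnit_det, ha], ?_⟩
  ext i j
  fin_cases i <;> fin_cases j <;> simp [Jmat, ha]

theorem exists_congruent_fromBlocks_Jmat {ι : Type*} [Fintype ι] [DecidableEq ι]
    {A : Matrix (Fin 2 ⊕ ι) (Fin 2 ⊕ ι) ℝ} (hA : Aᵀ = -A)
    (h01 : A (.inl 0) (.inl 1) ≠ 0) :
    ∃ S : Matrix ι ι ℝ, Sᵀ = -S ∧ A.Congruent (fromBlocks Jmat 0 0 S) := by
  obtain ⟨E, B, C, D, rfl⟩ : ∃ E B C D, A = fromBlocks E B C D :=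
    ⟨_, _, _, _, (fromBlocks_toBlocks A).symm⟩
  have hblocks := hA
  rw [fromBlocks_transpose, fromBlocks_neg, fromBlocks_inj] at hblocks
  obtain ⟨hE, -, hB, -⟩ := hblocks
  obtain rfl : C = -Bᵀ := by rw [hB, neg_neg]
  rw [fromBlocks_apply₁₁] at h01
  have hEJ := eq_smul_Jmat_of_transpose_eq_neg hE
  have hEu : IsUnit E := by
    rw [hEJ]
    simp [isUnit_iff_isUnit_det, Jmat, det_fin_two_of, h01]
  have hEJ' : E.Congruent Jmat := by
    rw [hEJ]
    exact congruent_smul_Jmat h01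
  set S := D + Bᵀ * E⁻¹ * B
  have hAS : (fromBlocks E B (-Bᵀ) D).Congruent (fromBlocks Jmat 0 0 S) :=
    (congruent_fromBlocks_zero_of_isUnit₁₁ hEu hE B D).trans (hEJ'.fromBlocks_zero (.refl S))
  refine ⟨S, ?_, hAS⟩
  have hJS := hAS.transpose_eq_neg hA
  rw [fromBlocks_transpose, fromBlocks_neg, fromBlocks_inj] at hJS
  exact hJS.2.2.2

theorem exists_congruent_embedJ (n : ℕ) (A : Matrix (Fin n) (Fin n) ℝ) (hA : Aᵀ = -A) :
    ∃ k, 2 * k ≤ n ∧ A.Congruent (embedJ n k) := by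
  induction n using Nat.strong_induction_on with
  | _ n ih =>
  by_cases hA0 : A = 0
  · exact ⟨0, by omega, by rw [hA0, embedJ_zero]; exact .refl 0⟩
  obtain ⟨i, j, hij⟩ : ∃ i j, A i j ≠ 0 := by
    by_contra! h
    exact hA0 (ext h)
  have hne : i ≠ j := by
    rintro rfl
    have hii : A i i = -A i i := congrFun (congrFun hA i) i
    exact hij (by linarith)
  obtain ⟨m, rfl⟩ : ∃ m, n = 2 + m := ⟨n - 2, by have := Fin.val_ne_of_ne hne; omega⟩
  let e : Fin 2 ⊕ Fin m ≃ Fin (2 + m) := finSumFinEquiv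
  obtain ⟨σ, hσi, hσj⟩ := MulAction.is_two_pretransitive_iff.mp
    (Equiv.Perm.isMultiplyPretransitive _ 2)
    (e.injective.ne (show (.inl 0 : Fin 2 ⊕ Fin m) ≠ .inl 1 by simp)) hne
  rw [Equiv.Perm.smul_def] at hσi hσj
  set A' := (A.submatrix σ σ).submatrix e e
  have hA' : A'ᵀ = -A' := by simp [A', transpose_submatrix, hA, submatrix_neg]
  obtain ⟨S, hS, hA'S⟩ :=
    exists_congruent_fromBlocks_Jmat hA' (by simpa [A', hσi, hσj] using hij)
  obtain ⟨k, hk, hSk⟩ := ih m (by omega) S hS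
  refine ⟨k + 1, by omega, ?_⟩
  have hA'J : A'.Congruent ((embedJ (2 + m) (k + 1)).submatrix e e) := by
    rw [submatrix_finSumFinEquiv_embedJ]
    exact hA'S.trans ((Matrix.Congruent.refl Jmat).fromBlocks_zero hSk)
  have hσJ := hA'J.submatrix e.symm
  simp only [A', submatrix_submatrix, Function.comp_assoc, Equiv.self_comp_symm,
    Function.comp_id] at hσJ
  exact (congruent_submatrix_perm A σ).trans hσJ

theorem skew_symmetric_standard_form_general (n : ℕ)
    (Θ : Matrix (Fin n) (Fin n) ℝ) (hΘ : Θᵀ = -Θ) :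
    ∃ (n_q : ℕ) (_ : 2 * n_q ≤ n) (P : Matrix (Fin n) (Fin n) ℝ),
      IsUnit P ∧ P * Θ * Pᵀ = embedJ n n_q := by
  obtain ⟨k, hk, P, hP, hPΘ⟩ := exists_congruent_embedJ n Θ hΘ
  exact ⟨k, hk, P, hP, hPΘ⟩

/-- For every integer `n ≥ 2` and every real skew-symmetric `n × n` matrix `Θ`, there exist
`n_q` with `2 n_q ≤ n` and an invertible real `n × n` matrix `P` such that
`P ⬝ Θ ⬝ Pᵀ = diag(diag_{n_q}(J), 0)`. -/
theorem skew_symmetric_standard_form (n : ℕ) (hn : 2 ≤ n)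
    (Θ : Matrix (Fin n) (Fin n) ℝ) (hΘ : Θᵀ = -Θ) :
    ∃ (n_q : ℕ) (_ : 2 * n_q ≤ n) (P : Matrix (Fin n) (Fin n) ℝ),
      IsUnit P ∧ P * Θ * Pᵀ = embedJ n n_q :=
  skew_symmetric_standard_form_general n Θ hΘ
end

section
/- For every m×m complex positive semidefinite Hermitian matrix F_v, there exists a real m×2m matrix W such that F_v = W·F_w·Wᵀ, where W is regarded as a complex matrix, Wᵀ is its transpose, and F_w = I_{2m} + i·diag_m(J). -/
open Matrix
open scoped ComplexOrder

/-- The canonical Ito matrix `F_w = I_{2m} + i · diag_m(J)` as a complex `2m × 2m` matrix. -/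
noncomputable def Fw (m : ℕ) : Matrix (Fin (2 * m)) (Fin (2 * m)) ℂ :=
  1 + Complex.I • (diagJ m).map (Complex.ofReal)

/-! Write `F_v = C Cᴴ`. The block `1 + iJ` equals `v vᴴ` for `v = (1, -i)`, so `F_w = V Vᴴ` with
`V` the `2m × m` matrix carrying a copy of `v` in each block column. Every complex `C` is `W V`
for a real `W` holding `Re C` and `-Im C` in alternating columns, and since `W` is real,
`W F_w Wᵀ = (W V)(W V)ᴴ = C Cᴴ`. -/

open Complex
open scoped Kronecker

def Jvec : Fin 2 → ℂ := ![1, -I]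

lemma one_add_I_smul_Jmat :
    1 + I • Jmat.map ofReal = vecMulVec Jvec (star Jvec) := by
  ext p q
  fin_cases p <;> fin_cases q <;> simp [Jvec, Jmat, vecMulVec_apply]

def finPairEquiv (m : ℕ) : Fin m × Fin 2 ≃ Fin (2 * m) :=
  finProdFinEquiv.trans (finCongr (mul_comm m 2))

lemma finPairEquiv_apply_val {m : ℕ} (x : Fin m × Fin 2) :
    (finPairEquiv m x : ℕ) = x.2 + 2 * x.1 :=
  rfl

lemma finPairEquiv_val_div_two {m : ℕ} (x : Fin m × Fin 2) :
    (finPairEquiv m x : ℕ) / 2 = x.1 := by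
  rw [finPairEquiv_apply_val]; omega

lemma finPairEquiv_val_mod_two {m : ℕ} (x : Fin m × Fin 2) (h : (finPairEquiv m x : ℕ) % 2 < 2) :
    (⟨(finPairEquiv m x : ℕ) % 2, h⟩ : Fin 2) = x.2 :=
  Fin.ext <| show _ % 2 = _ by rw [finPairEquiv_apply_val]; omega

lemma diagJ_submatrix_finPairEquiv (m : ℕ) :
    (diagJ m).submatrix (finPairEquiv m) (finPairEquiv m) = 1 ⊗ₖ Jmat := by
  ext ⟨k, p⟩ ⟨l, q⟩
  simp only [submatrix_apply, diagJ, of_apply, finPairEquiv_val_div_two, finPairEquiv_val_mod_two,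
    Fin.val_inj, kronecker_apply, one_apply, ite_mul, one_mul, zero_mul]

lemma Fw_submatrix_finPairEquiv (m : ℕ) :
    (Fw m).submatrix (finPairEquiv m) (finPairEquiv m) = 1 ⊗ₖ (1 + I • Jmat.map ofReal) := by
  set e := finPairEquiv m
  change (1 : Matrix (Fin (2 * m)) (Fin (2 * m)) ℂ).submatrix e e +
    I • ((diagJ m).submatrix e e).map ofReal = _
  rw [submatrix_one_equiv, diagJ_submatrix_finPairEquiv]
  ext ⟨k, p⟩ ⟨l, q⟩
  by_cases h : k = l <;> simp [one_apply, h]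

lemma mul_submatrix_mul_transpose {α ι ν ν' : Type*} [NonUnitalNonAssocSemiring α] [Fintype ν]
    [Fintype ν'] (W : Matrix ι ν α) (F : Matrix ν' ν' α) (e : ν ≃ ν') :
    W * F.submatrix e e * Wᵀ = W.submatrix id e.symm * F * (W.submatrix id e.symm)ᵀ := by
  have hF : F = (F.submatrix e e).submatrix e.symm e.symm := by simp
  conv_rhs =>
    rw [hF, transpose_submatrix, submatrix_mul_equiv, submatrix_mul_equiv, submatrix_id_id]

section Realification

variable {ι κ : Type*} [Fintype κ] [DecidableEq κ]

def blockJvec (κ : Type*) [DecidableEq κ] : Matrix (κ × Fin 2) κ ℂ :=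
  of fun x l => if x.1 = l then Jvec x.2 else 0

lemma blockJvec_mul_conjTranspose :
    blockJvec κ * (blockJvec κ)ᴴ = 1 ⊗ₖ vecMulVec Jvec (star Jvec) := by
  ext ⟨k, p⟩ ⟨l, q⟩
  by_cases h : k = l
  · subst h; simp [blockJvec, mul_apply, vecMulVec_apply]
  · simp [blockJvec, mul_apply, vecMulVec_apply, h, Ne.symm h]

lemma exists_map_ofReal_mul_blockJvec_eq (C : Matrix ι κ ℂ) :
    ∃ W : Matrix ι (κ × Fin 2) ℝ, W.map ofReal * blockJvec κ = C := by
  refine ⟨of fun a x => ![(C a x.1).re, -(C a x.1).im] x.2, ?_⟩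
  ext a l
  simp [blockJvec, mul_apply, Fintype.sum_prod_type, Jvec]

end Realification

/-- For every `m × m` complex positive semidefinite Hermitian matrix `F_v` there exists a real
`m × 2m` matrix `W` such that `F_v = W ⬝ F_w ⬝ Wᵀ`, where `F_w = I_{2m} + i·diag_m(J)`. -/
theorem psd_factorization_through_Fw (m : ℕ) (Fv : Matrix (Fin m) (Fin m) ℂ)
    (hFv : Fv.PosSemidef) :
    ∃ W : Matrix (Fin m) (Fin (2 * m)) ℝ,
      Fv = (W.map (Complex.ofReal)) * Fw m * (W.map (Complex.ofReal))ᵀ := by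
  open scoped MatrixOrder in
  obtain ⟨C, rfl⟩ : ∃ C, Fv = C * Cᴴ :=
    CStarAlgebra.nonneg_iff_eq_mul_star_self.mp hFv.nonneg
  obtain ⟨W, hW⟩ := exists_map_ofReal_mul_blockJvec_eq C
  refine ⟨W.submatrix id (finPairEquiv m).symm, ?_⟩
  have hW_real : (W.map ofReal)ᴴ = (W.map ofReal)ᵀ := by ext; simp
  calc C * Cᴴ = W.map ofReal * (blockJvec (Fin m) * (blockJvec (Fin m))ᴴ) * (W.map ofReal)ᵀ := by
        rw [← hW, conjTranspose_mul, hW_real]; simp only [Matrix.mul_assoc]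
    _ = W.map ofReal * (Fw m).submatrix (finPairEquiv m) (finPairEquiv m) * (W.map ofReal)ᵀ := by
        rw [blockJvec_mul_conjTranspose, Fw_submatrix_finPairEquiv, one_add_I_smul_Jmat]
    _ = _ := mul_submatrix_mul_transpose _ _ _
end

section
/- Let P_n be an invertible real n×n matrix, P_y an invertible real n_y×n_y matrix, and W a real m×2m matrix. Let 𝚯_n be a real skew-symmetric n×n matrix, Θ_v a real skew-symmetric m×m matrix, Θ_y a real skew-symmetric n_y×n_y matrix, and Θ_w = diag_m(J). Suppose Θ_n := P_n·𝚯_n·P_nᵀ, Θ_v = W·Θ_w·Wᵀ, and Θ_y' := P_y·Θ_y·P_yᵀ. Let 𝐀 (n×n), 𝐁 (n×m), 𝐂 (n_y×n), 𝐃 (n_y×m) be real matrices and define A = P_n·𝐀·P_n⁻¹, B = P_n·𝐁·W, C = P_y·𝐂·P_n⁻¹, D = P_y·𝐃·W. Then the three conditions (𝐀·𝚯_n + 𝚯_n·𝐀ᵀ + 𝐁·Θ_v·𝐁ᵀ = 0, 𝐁·Θ_v·𝐃ᵀ = −𝚯_n·𝐂ᵀ, 𝐃·Θ_v·𝐃ᵀ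 = Θ_y) hold if and only if the three conditions (A·Θ_n + Θ_n·Aᵀ + B·Θ_w·Bᵀ = 0, B·Θ_w·Dᵀ = −Θ_n·Cᵀ, D·Θ_w·Dᵀ = Θ_y') hold. -/
open Matrix

lemma conj_cancel {p q : Type*} [Fintype p] [Fintype q] [DecidableEq p] [DecidableEq q]
    (P : Matrix p p ℝ) (hP : IsUnit P) (Q : Matrix q q ℝ) (hQ : IsUnit Q)
    (X Y : Matrix p q ℝ) : P * X * Q = P * Y * Q ↔ X = Y := by
  constructor
  · intro h
    have hPd : IsUnit P.det := (Matrix.isUnit_iff_isUnit_det P).mp hP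
    have hQd : IsUnit Q.det := (Matrix.isUnit_iff_isUnit_det Q).mp hQ
    have := congrArg (fun M => P⁻¹ * M * Q⁻¹) h
    simpa [Matrix.mul_assoc, Matrix.nonsing_inv_mul_cancel_left _ _ hPd,
      Matrix.mul_nonsing_inv_cancel_right _ _ hQd] using this
  · intro h; rw [h]

/-- The physical realizability constraints of the general form and of the transformed standard
form are equivalent. -/
theorem realizability_general_iff_standard (n n_y m : ℕ)
    (Pn : Matrix (Fin n) (Fin n) ℝ) (hPn : IsUnit Pn)
    (Py : Matrix (Fin n_y) (Fin n_y) ℝ) (hPy : IsUnit Py)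
    (W : Matrix (Fin m) (Fin (2 * m)) ℝ)
    (Θng : Matrix (Fin n) (Fin n) ℝ) (hΘng : Θngᵀ = -Θng)
    (Θv : Matrix (Fin m) (Fin m) ℝ) (hΘv : Θvᵀ = -Θv)
    (Θy : Matrix (Fin n_y) (Fin n_y) ℝ) (hΘy : Θyᵀ = -Θy)
    (hW : Θv = W * diagJ m * Wᵀ)
    (Ag : Matrix (Fin n) (Fin n) ℝ) (Bg : Matrix (Fin n) (Fin m) ℝ)
    (Cg : Matrix (Fin n_y) (Fin n) ℝ) (Dg : Matrix (Fin n_y) (Fin m) ℝ)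
    (A : Matrix (Fin n) (Fin n) ℝ) (B : Matrix (Fin n) (Fin (2 * m)) ℝ)
    (C : Matrix (Fin n_y) (Fin n) ℝ) (D : Matrix (Fin n_y) (Fin (2 * m)) ℝ)
    (hA : A = Pn * Ag * Pn⁻¹) (hB : B = Pn * Bg * W)
    (hC : C = Py * Cg * Pn⁻¹) (hD : D = Py * Dg * W)
    (Θn : Matrix (Fin n) (Fin n) ℝ) (hΘn : Θn = Pn * Θng * Pnᵀ)
    (Θy' : Matrix (Fin n_y) (Fin n_y) ℝ) (hΘy' : Θy' = Py * Θy * Pyᵀ) :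
    (Ag * Θng + Θng * Agᵀ + Bg * Θv * Bgᵀ = 0 ∧
      Bg * Θv * Dgᵀ = -(Θng * Cgᵀ) ∧
      Dg * Θv * Dgᵀ = Θy) ↔
    (A * Θn + Θn * Aᵀ + B * diagJ m * Bᵀ = 0 ∧
      B * diagJ m * Dᵀ = -(Θn * Cᵀ) ∧
      D * diagJ m * Dᵀ = Θy') := by
  subst hA hB hC hD hΘn hΘy' hW
  have hPd : IsUnit Pn.det := (Matrix.isUnit_iff_isUnit_det Pn).mp hPn
  have h1 : ∀ (X : Matrix (Fin n) (Fin n) ℝ), Pn⁻¹ * (Pn * X) = X := fun X =>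
    Matrix.nonsing_inv_mul_cancel_left _ _ hPd
  have h2 : Pnᵀ * Pn⁻¹ᵀ = 1 := by
    rw [← Matrix.transpose_mul, Matrix.nonsing_inv_mul _ hPd, Matrix.transpose_one]
  have h2' : ∀ (X : Matrix (Fin n) (Fin n) ℝ), Pnᵀ * (Pn⁻¹ᵀ * X) = X := by
    intro X; rw [← Matrix.mul_assoc, h2, Matrix.one_mul]
  have e1 : Pn * Ag * Pn⁻¹ * (Pn * Θng * Pnᵀ) + Pn * Θng * Pnᵀ * (Pn * Ag * Pn⁻¹)ᵀ +
      Pn * Bg * W * diagJ m * (Pn * Bg * W)ᵀ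
      = Pn * (Ag * Θng + Θng * Agᵀ + Bg * (W * diagJ m * Wᵀ) * Bgᵀ) * Pnᵀ := by
    simp only [Matrix.transpose_mul, Matrix.mul_add, Matrix.add_mul, Matrix.mul_assoc, h1, h2']
  have e2 : Pn * Bg * W * diagJ m * (Py * Dg * W)ᵀ = Pn * (Bg * (W * diagJ m * Wᵀ) * Dgᵀ) * Pyᵀ := by
    simp only [Matrix.transpose_mul, Matrix.mul_assoc]
  have e3 : -(Pn * Θng * Pnᵀ * (Py * Cg * Pn⁻¹)ᵀ) = Pn * (-(Θng * Cgᵀ)) * Pyᵀ := by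
    simp only [Matrix.transpose_mul, Matrix.mul_assoc, Matrix.mul_neg, Matrix.neg_mul]
    rw [← Matrix.mul_assoc Pnᵀ, h2, Matrix.one_mul]
  have e4 : Py * Dg * W * diagJ m * (Py * Dg * W)ᵀ = Py * (Dg * (W * diagJ m * Wᵀ) * Dgᵀ) * Pyᵀ := by
    simp only [Matrix.transpose_mul, Matrix.mul_assoc]
  have hPnT : IsUnit Pnᵀ := (Matrix.isUnit_iff_isUnit_det _).mpr
    (by rw [Matrix.det_transpose]; exact hPd)
  have hPyT : IsUnit Pyᵀ := (Matrix.isUnit_iff_isUnit_det _).mpr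
    (by rw [Matrix.det_transpose]; exact (Matrix.isUnit_iff_isUnit_det Py).mp hPy)
  rw [e1, e2, e3, e4]
  conv_rhs => rw [show (0 : Matrix (Fin n) (Fin n) ℝ) = Pn * 0 * Pnᵀ by simp]
  rw [conj_cancel Pn hPn Pnᵀ hPnT, conj_cancel Pn hPn Pyᵀ hPyT, conj_cancel Py hPy Pyᵀ hPyT]
end

section
/- Let n_q, n_c, m, n_yq, n_yc be natural numbers with n = 2n_q + n_c, n_y = 2n_yq + n_yc. Let Θ_n = diag(diag_{n_q}(J), 0_{n_c×n_c}), Θ_q = diag_{n_q}(J), Θ_w = diag_m(J), Θ_yq = diag_{n_yq}(J). Let A = [[A_qq, A_qc],[A_cq, A_cc]] (n×n), B = [B_q; B_c] (n×2m), C = [[C_qq, C_qc],[C_cq, C_cc]] (n_y×n), D = [D_q; D_c] (n_y×2m) be real matrices partitioned so that A_qq is 2n_q×2n_q, B_q is 2n_q×2m, C_qq is 2n_yq×2n_q, D_q is 2n_yq×2m. Then the three conditions (1) A·Θ_n + Θ_n·Aᵀ + B·Θ_w·Bᵀ = 0, (2) B·Θ_w·Dᵀ = −Θ_n·Cᵀ,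 (3) D·Θ_w·Dᵀ = diag(Θ_yq, 0_{n_yc×n_yc}) hold if and only if all of the following ten equations hold: D_q·Θ_w·D_qᵀ = Θ_yq, D_q·Θ_w·D_cᵀ = 0, D_c·Θ_w·D_cᵀ = 0, A_qq·Θ_q + Θ_q·A_qqᵀ + B_q·Θ_w·B_qᵀ = 0, A_cq·Θ_q + B_c·Θ_w·B_qᵀ = 0, B_c·Θ_w·B_cᵀ = 0, B_c·Θ_w·D_qᵀ = 0, B_q·Θ_w·D_qᵀ = −Θ_q·C_qqᵀ, B_c·Θ_w·D_cᵀ = 0, and B_q·Θ_w·D_cᵀ = −Θ_q·C_cqᵀ. -/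
/-! Each of the three conditions is an equation between block matrices and so splits into its
block equations. Because `diagJ` is skew-symmetric, the left-hand sides of (1) and (3) are
skew-symmetric: their two off-diagonal blocks are minus the transposes of each other, so only one
off-diagonal block equation survives in each. -/

open Matrix

theorem transpose_diagJ (k : ℕ) : (diagJ k)ᵀ = -diagJ k := by
  ext i j
  simp only [transpose_apply, Matrix.neg_apply, diagJ, of_apply]
  rcases eq_or_ne (i.val / 2) (j.val / 2) with h | h
  · rw [if_pos h.symm, if_pos h]
    rcases Nat.mod_two_eq_zero_or_one i.val with hi | hi <;>
      rcases Nat.mod_two_eq_zero_or_one j.val with hj | hj <;>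
      simp [hi, hj, Jmat]
  · rw [if_neg (Ne.symm h), if_neg h, neg_zero]

namespace Matrix

variable {R : Type*} [CommRing R] {k l o p q : Type*} [Fintype k]

theorem fromRows_mul_mul_transpose_fromRows (X₁ : Matrix l k R) (X₂ : Matrix o k R)
    (S : Matrix k k R) (Y₁ : Matrix p k R) (Y₂ : Matrix q k R) :
    fromRows X₁ X₂ * S * (fromRows Y₁ Y₂)ᵀ =
      fromBlocks (X₁ * S * Y₁ᵀ) (X₁ * S * Y₂ᵀ) (X₂ * S * Y₁ᵀ) (X₂ * S * Y₂ᵀ) := by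
  rw [fromRows_mul, transpose_fromRows, fromRows_mul_fromCols]

theorem transpose_mul_mul_transpose_of_transpose_eq_neg {S : Matrix k k R} (hS : Sᵀ = -S)
    (X : Matrix l k R) (Y : Matrix p k R) : (X * S * Yᵀ)ᵀ = -(Y * S * Xᵀ) := by
  simp only [transpose_mul, transpose_transpose, hS, Matrix.neg_mul, Matrix.mul_neg,
    Matrix.mul_assoc]

theorem transpose_mul_of_transpose_eq_neg {S : Matrix k k R} (hS : Sᵀ = -S)
    (A : Matrix l k R) : (A * S)ᵀ = -(S * Aᵀ) := by
  rw [transpose_mul, hS, Matrix.neg_mul]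

end Matrix

section BlockEquations

variable {R : Type*} [CommRing R] {q c w y z : Type*} [Fintype q] [Fintype c] [Fintype w]

theorem fromBlocks_lyapunov_eq_zero_iff {Θ : Matrix q q R} (hΘ : Θᵀ = -Θ)
    {W : Matrix w w R} (hW : Wᵀ = -W) (Aqq : Matrix q q R) (Aqc : Matrix q c R)
    (Acq : Matrix c q R) (Acc : Matrix c c R) (Bq : Matrix q w R) (Bc : Matrix c w R) :
    fromBlocks Aqq Aqc Acq Acc * fromBlocks Θ 0 0 0 +
        fromBlocks Θ 0 0 0 * (fromBlocks Aqq Aqc Acq Acc)ᵀ +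
        fromRows Bq Bc * W * (fromRows Bq Bc)ᵀ = 0 ↔
      Aqq * Θ + Θ * Aqqᵀ + Bq * W * Bqᵀ = 0 ∧
        Acq * Θ + Bc * W * Bqᵀ = 0 ∧ Bc * W * Bcᵀ = 0 := by
  have hcq : Θ * Acqᵀ + Bq * W * Bcᵀ = -(Acq * Θ + Bc * W * Bqᵀ)ᵀ := by
    rw [transpose_add, transpose_mul_of_transpose_eq_neg hΘ,
      transpose_mul_mul_transpose_of_transpose_eq_neg hW, neg_add, neg_neg, neg_neg]
  rw [fromRows_mul_mul_transpose_fromRows, fromBlocks_transpose, fromBlocks_multiply,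
    fromBlocks_multiply, fromBlocks_add, fromBlocks_add, ← fromBlocks_zero, fromBlocks_inj]
  simp only [Matrix.mul_zero, Matrix.zero_mul, add_zero, zero_add, hcq, neg_eq_zero,
    transpose_eq_zero]
  tauto

theorem fromRows_mul_mul_transpose_fromRows_eq_neg_iff (W : Matrix w w R)
    (Bq : Matrix q w R) (Bc : Matrix c w R) (Dq : Matrix y w R) (Dc : Matrix z w R)
    (Θ : Matrix q q R) (Cqq : Matrix y q R) (Cqc : Matrix y c R) (Ccq : Matrix z q R)
    (Ccc : Matrix z c R) :
    fromRows Bq Bc * W * (fromRows Dq Dc)ᵀ =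
        -- without the ascription `*` elaborates through `CStarMatrix`'s default `HMul` instance
        -((fromBlocks Θ 0 0 0 : Matrix (q ⊕ c) (q ⊕ c) R) * (fromBlocks Cqq Cqc Ccq Ccc)ᵀ) ↔
      Bq * W * Dqᵀ = -(Θ * Cqqᵀ) ∧ Bq * W * Dcᵀ = -(Θ * Ccqᵀ) ∧
        Bc * W * Dqᵀ = 0 ∧ Bc * W * Dcᵀ = 0 := by
  rw [fromRows_mul_mul_transpose_fromRows, fromBlocks_transpose, fromBlocks_multiply,
    fromBlocks_neg, fromBlocks_inj]
  simp only [Matrix.zero_mul, add_zero, neg_zero]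

theorem fromRows_mul_mul_transpose_fromRows_eq_fromBlocks_iff {W : Matrix w w R}
    (hW : Wᵀ = -W) (Dq : Matrix y w R) (Dc : Matrix z w R) (Θ : Matrix y y R) :
    fromRows Dq Dc * W * (fromRows Dq Dc)ᵀ = fromBlocks Θ 0 0 0 ↔
      Dq * W * Dqᵀ = Θ ∧ Dq * W * Dcᵀ = 0 ∧ Dc * W * Dcᵀ = 0 := by
  have hcq : Dc * W * Dqᵀ = -(Dq * W * Dcᵀ)ᵀ := by
    rw [transpose_mul_mul_transpose_of_transpose_eq_neg hW, neg_neg]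
  rw [fromRows_mul_mul_transpose_fromRows, fromBlocks_inj, hcq, neg_eq_zero, transpose_eq_zero]
  tauto

end BlockEquations

/-- The physical realizability constraints of a standard-form mixed quantum-classical linear
stochastic system are equivalent to the ten block equations. -/
theorem realizability_block_equations (n_q n_c m n_yq n_yc : ℕ)
    (Aqq : Matrix (Fin (2 * n_q)) (Fin (2 * n_q)) ℝ)
    (Aqc : Matrix (Fin (2 * n_q)) (Fin n_c) ℝ)
    (Acq : Matrix (Fin n_c) (Fin (2 * n_q)) ℝ)
    (Acc : Matrix (Fin n_c) (Fin n_c) ℝ)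
    (Bq : Matrix (Fin (2 * n_q)) (Fin (2 * m)) ℝ)
    (Bc : Matrix (Fin n_c) (Fin (2 * m)) ℝ)
    (Cqq : Matrix (Fin (2 * n_yq)) (Fin (2 * n_q)) ℝ)
    (Cqc : Matrix (Fin (2 * n_yq)) (Fin n_c) ℝ)
    (Ccq : Matrix (Fin n_yc) (Fin (2 * n_q)) ℝ)
    (Ccc : Matrix (Fin n_yc) (Fin n_c) ℝ)
    (Dq : Matrix (Fin (2 * n_yq)) (Fin (2 * m)) ℝ)
    (Dc : Matrix (Fin n_yc) (Fin (2 * m)) ℝ) :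
    (Matrix.fromBlocks Aqq Aqc Acq Acc * Matrix.fromBlocks (diagJ n_q) 0 0 0 +
        Matrix.fromBlocks (diagJ n_q) 0 0 0 * (Matrix.fromBlocks Aqq Aqc Acq Acc)ᵀ +
        Matrix.fromRows Bq Bc * diagJ m * (Matrix.fromRows Bq Bc)ᵀ = 0 ∧
      Matrix.fromRows Bq Bc * diagJ m * (Matrix.fromRows Dq Dc)ᵀ =
        -(Matrix.fromBlocks (diagJ n_q) 0 0 0 * (Matrix.fromBlocks Cqq Cqc Ccq Ccc)ᵀ) ∧
      Matrix.fromRows Dq Dc * diagJ m * (Matrix.fromRows Dq Dc)ᵀ =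
        Matrix.fromBlocks (diagJ n_yq) 0 0 0) ↔
    (Dq * diagJ m * Dqᵀ = diagJ n_yq ∧
      Dq * diagJ m * Dcᵀ = 0 ∧
      Dc * diagJ m * Dcᵀ = 0 ∧
      Aqq * diagJ n_q + diagJ n_q * Aqqᵀ + Bq * diagJ m * Bqᵀ = 0 ∧
      Acq * diagJ n_q + Bc * diagJ m * Bqᵀ = 0 ∧
      Bc * diagJ m * Bcᵀ = 0 ∧
      Bc * diagJ m * Dqᵀ = 0 ∧
      Bq * diagJ m * Dqᵀ = -(diagJ n_q * Cqqᵀ) ∧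
      Bc * diagJ m * Dcᵀ = 0 ∧
      Bq * diagJ m * Dcᵀ = -(diagJ n_q * Ccqᵀ)) := by
  have hJ := transpose_diagJ
  refine (and_congr (fromBlocks_lyapunov_eq_zero_iff (hJ n_q) (hJ m) Aqq Aqc Acq Acc Bq Bc)
    (and_congr (fromRows_mul_mul_transpose_fromRows_eq_neg_iff _ Bq Bc Dq Dc _ Cqq Cqc Ccq Ccc)
      (fromRows_mul_mul_transpose_fromRows_eq_fromBlocks_iff (hJ m) Dq Dc _))).trans ?_
  tauto
end
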